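/- If a variety of semigroups is defined by the law x y x z x y x = x y z y x, then its relatively free semigroup on 2 generators is finite. Concretely: the quotient of the free semigroup on {x,y} by the fully invariant congruence generated by x y x z x y x = x y z y x has finitely many elements. -/
import Mathlib

open FreeSemigroup

/-- Pairs of substitution instances of the identity x y x z x y x = x y z y x
in the free semigroup on two generators. -/
def instRel (a b : FreeSemigroup (Fin 2)) : Prop :=
  ∃ f : Fin 3 → FreeSemigroup (Fin 2),
    a = f 0 * f 1 * f 0 * f 2 * (f 0 * f 1 * f 0) ∧
    b = f 0 * f 1 * f 2 * f 1 * f 0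

namespace Stmt18Aux

abbrev FS := FreeSemigroup (Fin 2)

/-- Word (nonempty list) to free semigroup element. Junk value on `[]`. -/
def nel : List (Fin 2) → FS
  | [] => FreeSemigroup.of 0
  | [a] => FreeSemigroup.of a
  | a :: b :: l => FreeSemigroup.of a * nel (b :: l)

lemma nel_cons (a : Fin 2) {l : List (Fin 2)} (h : l ≠ []) :
    nel (a :: l) = FreeSemigroup.of a * nel l := by
  cases l with
  | nil => exact absurd rfl h
  | cons b t => rfl

lemma ne_nil_append {u : List (Fin 2)} (v : List (Fin 2)) (h : u ≠ []) : u ++ v ≠ [] :=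
  fun hh => h (List.append_eq_nil_iff.mp hh).1

lemma nel_append {u v : List (Fin 2)} (hu : u ≠ []) (hv : v ≠ []) :
    nel (u ++ v) = nel u * nel v := by
  induction u with
  | nil => exact absurd rfl hu
  | cons a t ih =>
    cases t with
    | nil =>
      rw [List.singleton_append, nel_cons a hv]; rfl
    | cons b t' =>
      rw [List.cons_append, nel_cons a (ne_nil_append v (by simp)),
        ih (by simp), nel_cons a (l := b :: t') (by simp), mul_assoc]

def len (w : FS) : ℕ := w.tail.length + 1

lemma len_nel {l : List (Fin 2)} (h : l ≠ []) : len (nel l) = l.length := by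
  induction l with
  | nil => exact absurd rfl h
  | cons a t ih =>
    cases t with
    | nil => rfl
    | cons b t' =>
      rw [nel_cons a (by simp)]
      have : len (FreeSemigroup.of a * nel (b :: t')) = 1 + len (nel (b :: t')) := by
        simp only [len, FreeSemigroup.of]
        show ([] ++ (nel (b :: t')).head :: (nel (b :: t')).tail).length + 1 = _
        simp; omega
      rw [this, ih (by simp)]
      simp [Nat.add_comm]

lemma nel_head_tail (w : FS) : nel (w.head :: w.tail) = w := by
  obtain ⟨a, l⟩ := w
  induction l generalizing a with
  | nil => rfl
  | cons b t ih =>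
    show nel (a :: b :: t) = _
    rw [nel_cons a (by simp), ih b]
    rfl


lemma len_mul (w v : FS) : len (w * v) = len w + len v := by
  obtain ⟨a, l⟩ := w; obtain ⟨b, m⟩ := v
  show (l ++ b :: m).length + 1 = (l.length + 1) + (m.length + 1)
  simp; omega

def lmul : List (Fin 2) → FS → FS
  | [], w => w
  | a :: P, w => FreeSemigroup.of a * lmul P w

def rmul : FS → List (Fin 2) → FS
  | w, [] => w
  | w, a :: Q => rmul (w * FreeSemigroup.of a) Q

lemma ne_nil_append' (u : List (Fin 2)) {v : List (Fin 2)} (h : v ≠ []) : u ++ v ≠ [] :=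
  fun hh => h (List.append_eq_nil_iff.mp hh).2

lemma nel_lmul (P : List (Fin 2)) {l : List (Fin 2)} (h : l ≠ []) :
    nel (P ++ l) = lmul P (nel l) := by
  induction P with
  | nil => rfl
  | cons a P ih =>
    rw [List.cons_append, nel_cons a (ne_nil_append' P h), ih]
    rfl

lemma nel_rmul {l : List (Fin 2)} (Q : List (Fin 2)) (h : l ≠ []) :
    nel (l ++ Q) = rmul (nel l) Q := by
  induction Q generalizing l with
  | nil => simp [rmul]
  | cons a Q ih =>
    have h1 : l ++ a :: Q = (l ++ [a]) ++ Q := by simp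
    rw [h1, ih (ne_nil_append [a] h), nel_append h (by simp)]
    rfl

lemma len_lmul (P : List (Fin 2)) (w : FS) : len (lmul P w) = P.length + len w := by
  induction P with
  | nil => simp [lmul]
  | cons a P ih =>
    show len (FreeSemigroup.of a * lmul P w) = _
    rw [len_mul, ih]
    show 1 + _ = _
    simp; omega

lemma len_rmul (w : FS) (Q : List (Fin 2)) : len (rmul w Q) = len w + Q.length := by
  induction Q generalizing w with
  | nil => simp [rmul]
  | cons a Q ih =>
    show len (rmul (w * FreeSemigroup.of a) Q) = _
    rw [ih, len_mul]
    show _ + 1 + _ = _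
    simp; omega

abbrev Rel := ConGen.Rel instRel

lemma rel_lmul (P : List (Fin 2)) {w w' : FS} (h : Rel w w') : Rel (lmul P w) (lmul P w') := by
  induction P with
  | nil => exact h
  | cons a P ih => exact ConGen.Rel.mul (ConGen.Rel.refl _) ih

lemma rel_rmul (Q : List (Fin 2)) {w w' : FS} (h : Rel w w') : Rel (rmul w Q) (rmul w' Q) := by
  induction Q generalizing w w' with
  | nil => exact h
  | cons a Q ih => exact ih (ConGen.Rel.mul h (ConGen.Rel.refl _))

lemma rel_core (X Y Z : FS) :
    Rel (X * (Y * (X * (Z * (X * (Y * X)))))) (X * (Y * (Z * (Y * X)))) := by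
  have h : Rel (X * Y * X * Z * (X * Y * X)) (X * Y * Z * Y * X) :=
    ConGen.Rel.of _ _ ⟨![X, Y, Z], rfl, rfl⟩
  simpa only [mul_assoc] using h


lemma A5 (a b c d e : Fin 2) :
    ∃ p x y q : List (Fin 2), x ≠ [] ∧ y ≠ [] ∧
      ([a, b, c, d, e] : List (Fin 2)) = p ++ (x ++ (y ++ (x ++ q))) := by
  fin_cases a <;> fin_cases b <;> fin_cases c <;> fin_cases d <;> fin_cases e <;>
    first
    | exact ⟨[], [0], [0], [0,0], by decide, by decide, by decide⟩
    | exact ⟨[], [0], [0], [0,1], by decide, by decide, by decide⟩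
    | exact ⟨[], [0], [0], [1,0], by decide, by decide, by decide⟩
    | exact ⟨[], [0], [0], [1,1], by decide, by decide, by decide⟩
    | exact ⟨[], [0], [0,1], [0], by decide, by decide, by decide⟩
    | exact ⟨[], [0], [0,1], [1], by decide, by decide, by decide⟩
    | exact ⟨[], [0], [0,1,1], [], by decide, by decide, by decide⟩
    | exact ⟨[0,0], [1], [1], [], by decide, by decide, by decide⟩
    | exact ⟨[], [0], [1], [0,0], by decide, by decide, by decide⟩
    | exact ⟨[], [0], [1], [0,1], by decide, by decide, by decide⟩
    | exact ⟨[], [0], [1], [1,0], by decide, by decide, by decide⟩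
    | exact ⟨[], [0], [1], [1,1], by decide, by decide, by decide⟩
    | exact ⟨[], [0], [1,1], [0], by decide, by decide, by decide⟩
    | exact ⟨[], [0], [1,1], [1], by decide, by decide, by decide⟩
    | exact ⟨[], [0], [1,1,1], [], by decide, by decide, by decide⟩
    | exact ⟨[0], [1], [1], [1], by decide, by decide, by decide⟩
    | exact ⟨[1], [0], [0], [0], by decide, by decide, by decide⟩
    | exact ⟨[], [1], [0,0,0], [], by decide, by decide, by decide⟩
    | exact ⟨[], [1], [0,0], [0], by decide, by decide, by decide⟩
    | exact ⟨[], [1], [0,0], [1], by decide, by decide, by decide⟩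
    | exact ⟨[], [1], [0], [0,0], by decide, by decide, by decide⟩
    | exact ⟨[], [1], [0], [0,1], by decide, by decide, by decide⟩
    | exact ⟨[], [1], [0], [1,0], by decide, by decide, by decide⟩
    | exact ⟨[], [1], [0], [1,1], by decide, by decide, by decide⟩
    | exact ⟨[1,1], [0], [0], [], by decide, by decide, by decide⟩
    | exact ⟨[], [1], [1,0,0], [], by decide, by decide, by decide⟩
    | exact ⟨[], [1], [1,0], [0], by decide, by decide, by decide⟩
    | exact ⟨[], [1], [1,0], [1], by decide, by decide, by decide⟩
    | exact ⟨[], [1], [1], [0,0], by decide, by decide, by decide⟩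
    | exact ⟨[], [1], [1], [0,1], by decide, by decide, by decide⟩
    | exact ⟨[], [1], [1], [1,0], by decide, by decide, by decide⟩
    | exact ⟨[], [1], [1], [1,1], by decide, by decide, by decide⟩


lemma take5_eq (l : List (Fin 2)) (m m' : ℕ) (hm : m + 5 ≤ l.length) (hm' : m' + 5 ≤ l.length)
    (h : ∀ k : Fin 5, l.getD (m + k) 0 = l.getD (m' + k) 0) :
    (l.drop m).take 5 = (l.drop m').take 5 := by
  apply List.ext_getElem
  · simp; omega
  · intro k h1 h2
    have hk : k < 5 := by simp at h1; omega
    have e1 : m + k < l.length := by omega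
    have e2 : m' + k < l.length := by omega
    have := h ⟨k, hk⟩
    simp only [List.getElem_take, List.getElem_drop]
    rwa [List.getD_eq_getElem l 0 e1, List.getD_eq_getElem l 0 e2] at this


lemma list5 (B : List (Fin 2)) (h : B.length = 5) :
    ∃ a b c d e : Fin 2, B = [a, b, c, d, e] := by
  rcases B with _|⟨a,_|⟨b,_|⟨c,_|⟨d,_|⟨e,_|⟨f,t⟩⟩⟩⟩⟩⟩ <;> simp at h
  exact ⟨a, b, c, d, e, rfl⟩

lemma exists_decomp' (l : List (Fin 2)) (hl : 325 ≤ l.length) (i j : ℕ)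
    (hj : j ≤ 32) (hlt : i < j)
    (h : ∀ k : Fin 5, l.getD (10 * i + k) 0 = l.getD (10 * j + k) 0) :
    ∃ P x y z Q : List (Fin 2), x ≠ [] ∧ y ≠ [] ∧ z ≠ [] ∧
      l = P ++ ((x ++ (y ++ (x ++ (z ++ (x ++ (y ++ x)))))) ++ Q) := by
  set m := 10 * i with hmdef
  set m' := 10 * j with hmdef'
  have hmm : m + 10 ≤ m' := by omega
  have hm : m + 5 ≤ l.length := by omega
  have hm' : m' + 5 ≤ l.length := by omega
  have hBB := take5_eq l m m' hm hm' h
  set B := (l.drop m).take 5 with hB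
  have hBlen : B.length = 5 := by
    rw [hB]; simp; omega
  set M := (l.drop (m + 5)).take (m' - (m + 5)) with hM
  have hMne : M ≠ [] := by
    have : M.length = min (m' - (m + 5)) (l.length - (m + 5)) := by simp [hM]
    intro hcon
    rw [hcon] at this
    simp at this
    omega
  have h2' : l.drop m = B ++ l.drop (m + 5) := by
    conv_lhs => rw [← List.take_append_drop 5 (l.drop m)]
    rw [List.drop_drop]
  have h4' : l.drop (m + 5) = M ++ l.drop m' := by
    conv_lhs => rw [← List.take_append_drop (m' - (m + 5)) (l.drop (m + 5))]
    have hms : m + 5 + (m' - (m + 5)) = m' := by omega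
    rw [List.drop_drop, hms]
  have h6' : l.drop m' = B ++ l.drop (m' + 5) := by
    conv_lhs => rw [← List.take_append_drop 5 (l.drop m')]
    rw [List.drop_drop, ← hBB]
  have key : l = l.take m ++ (B ++ (M ++ (B ++ l.drop (m' + 5)))) := by
    calc l = l.take m ++ l.drop m := (List.take_append_drop m l).symm
    _ = l.take m ++ (B ++ l.drop (m + 5)) := by rw [← h2']
    _ = l.take m ++ (B ++ (M ++ l.drop m')) := by rw [← h4']
    _ = l.take m ++ (B ++ (M ++ (B ++ l.drop (m' + 5)))) := by rw [← h6']
  obtain ⟨a, b, c, d, e, hBe⟩ := list5 B hBlen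
  obtain ⟨p, x, y, q, hx, hy, hdec⟩ := A5 a b c d e
  rw [← hBe] at hdec
  refine ⟨l.take m ++ p, x, y, q ++ (M ++ p), q ++ l.drop (m' + 5), hx, hy,
    ne_nil_append' q (ne_nil_append p hMne), ?_⟩
  conv_lhs => rw [key]
  rw [hdec]
  simp only [List.append_assoc]

lemma exists_decomp (l : List (Fin 2)) (hl : 325 ≤ l.length) :
    ∃ P x y z Q : List (Fin 2), x ≠ [] ∧ y ≠ [] ∧ z ≠ [] ∧
      l = P ++ ((x ++ (y ++ (x ++ (z ++ (x ++ (y ++ x)))))) ++ Q) := by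
  have card : Fintype.card (Fin 5 → Fin 2) < Fintype.card (Fin 33) := by simp
  obtain ⟨i, j, hij, hfij⟩ := Fintype.exists_ne_map_eq_of_card_lt
    (fun (i : Fin 33) (k : Fin 5) => l.getD (10 * i + k) 0) card
  have hvne : (i : ℕ) ≠ (j : ℕ) := fun hv => hij (Fin.ext hv)
  rcases hvne.lt_or_gt with hlt | hlt
  · exact exists_decomp' l hl i j (by omega) hlt (fun k => congrFun hfij k)
  · exact exists_decomp' l hl j i (by omega) hlt (fun k => (congrFun hfij k).symm)


lemma shrink (l : List (Fin 2)) (hl : 325 ≤ l.length) :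
    ∃ l' : List (Fin 2), l' ≠ [] ∧ l'.length + 2 ≤ l.length ∧ Rel (nel l) (nel l') := by
  obtain ⟨P, x, y, z, Q, hx, hy, hz, hdec⟩ := exists_decomp l hl
  subst hdec
  set C := x ++ (y ++ (x ++ (z ++ (x ++ (y ++ x))))) with hC
  set C' := x ++ (y ++ (z ++ (y ++ x))) with hC'
  have hCne : C ≠ [] := ne_nil_append _ hx
  have hC'ne : C' ≠ [] := ne_nil_append _ hx
  have hCQ : C ++ Q ≠ [] := ne_nil_append _ hCne
  have hC'Q : C' ++ Q ≠ [] := ne_nil_append _ hC'ne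
  have hnelC : nel C = nel x * (nel y * (nel x * (nel z * (nel x * (nel y * nel x))))) := by
    rw [hC, nel_append hx (ne_nil_append _ hy), nel_append hy (ne_nil_append _ hx),
      nel_append hx (ne_nil_append _ hz), nel_append hz (ne_nil_append _ hx),
      nel_append hx (ne_nil_append _ hy), nel_append hy hx]
  have hnelC' : nel C' = nel x * (nel y * (nel z * (nel y * nel x))) := by
    rw [hC', nel_append hx (ne_nil_append _ hy), nel_append hy (ne_nil_append _ hz),
      nel_append hz (ne_nil_append _ hy), nel_append hy hx]
  have hrel : Rel (nel C) (nel C') := by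
    rw [hnelC, hnelC']; exact rel_core _ _ _
  refine ⟨P ++ (C' ++ Q), ne_nil_append' _ hC'Q, ?_, ?_⟩
  · have h1 := List.length_pos_iff.mpr hx
    simp only [hC, hC', List.length_append]
    omega
  · rw [nel_lmul P hCQ, nel_lmul P hC'Q, nel_rmul Q hCne, nel_rmul Q hC'ne]
    exact rel_lmul P (rel_rmul Q hrel)

lemma reduce : ∀ (n : ℕ) (w : FS), len w ≤ n → ∃ v, len v ≤ 325 ∧ Rel w v := by
  intro n
  induction n with
  | zero => intro w h; exact absurd h (by simp [len])
  | succ n ih =>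
    intro w hw
    by_cases h325 : len w ≤ 325
    · exact ⟨w, h325, ConGen.Rel.refl w⟩
    · have hlen : (w.head :: w.tail).length = len w := by simp [len]
      have h1 : 325 ≤ (w.head :: w.tail).length := by omega
      obtain ⟨l', hne, hlt, hrel⟩ := shrink _ h1
      have h2 : len (nel l') ≤ n := by rw [len_nel hne]; omega
      obtain ⟨v, hv, hrelv⟩ := ih (nel l') h2
      refine ⟨v, hv, ConGen.Rel.trans ?_ hrelv⟩
      rw [nel_head_tail w] at hrel
      exact hrel

end Stmt18Aux

open Stmt18Aux in
/-- The relatively free 2-generated semigroup of the variety defined by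
x y x z x y x = x y z y x is finite. -/
theorem stmt_18 : Finite (conGen instRel).Quotient := by
  have hfin : {l : List (Fin 2) | l.length ≤ 325}.Finite := List.finite_length_le _ _
  haveI : Finite {l : List (Fin 2) // l.length ≤ 325} := hfin.to_subtype
  apply Finite.of_surjective
    (fun p : Fin 2 × {l : List (Fin 2) // l.length ≤ 325} =>
      ((⟨p.1, p.2.1⟩ : FS) : (conGen instRel).Quotient))
  intro q
  obtain ⟨w, rfl⟩ := Quotient.exists_rep q
  obtain ⟨v, hv, hrel⟩ := reduce (len w) w le_rfl
  have hvt : v.tail.length ≤ 325 := by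
    have : len v = v.tail.length + 1 := rfl
    omega
  refine ⟨(v.head, ⟨v.tail, hvt⟩), ?_⟩
  show ((⟨v.head, v.tail⟩ : FS) : (conGen instRel).Quotient) = _
  exact Quotient.sound (ConGen.Rel.symm hrel)
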